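/- Let q, x, y be complex numbers with |q| < 1, |x| ≤ 1, |y| ≤ 1. Then Σ_{n₁,n₂,n₃,n₄ ≥ 0} x^{n₁+n₂+2n₄} y^{n₂+n₃} q^{2C(n₁,2) + 2n₁n₂ + 4n₁n₃ + 4n₃n₄ + n₁ + 3n₂ + 2n₃ + 2n₄} / ((q²;q²)_{n₁}(q²;q²)_{n₂}(q⁴;q⁴)_{n₃}(q⁴;q⁴)_{n₄}) = ((x²yq⁴;q⁴)_∞ / ((x²q²;q⁴)_∞ (xyq³;q²)_∞ (yq²;q⁴)_∞)) · Σ_{n ≥ 0} xⁿ q^{2C(n,2)+n} (xyq³;q²)_n (yq²;q⁴)_n / ((q²;q²)_n (x²yq⁴;q⁴)_n). -/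

import Mathlib

/-- The finite q-Pochhammer symbol `(a; q)_n = ∏_{k=0}^{n-1} (1 - a q^k)`. -/
noncomputable def qPoch (a q : ℂ) (n : ℕ) : ℂ :=
  ∏ k ∈ Finset.range n, (1 - a * q ^ k)

/-- The infinite q-Pochhammer symbol `(a; q)_∞ = ∏_{k=0}^{∞} (1 - a q^k)`. -/
noncomputable def qPochInf (a q : ℂ) : ℂ :=
  ∏' k : ℕ, (1 - a * q ^ k)

/-!
Sum the quadruple series from the inside out. Its summand factors as
`x^n₁ q^(2C(n₁,2)+n₁) / (q²;q²)_n₁` times `(xyq³ q^(2n₁))^n₂ / (q²;q²)_n₂`,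
`(yq² q^(4n₁))^n₃ / (q⁴;q⁴)_n₃` and `(x²q² q^(4n₃))^n₄ / (q⁴;q⁴)_n₄`. Euler's identity
`∑ zⁿ/(q;q)_n = 1/(z;q)_∞` turns the `n₄`-sum into `(x²q²;q⁴)_n₃ / (x²q²;q⁴)_∞` and the
`n₂`-sum into `(xyq³;q²)_n₁ / (xyq³;q²)_∞`; the `n₃`-sum is then a q-binomial series, and
`(a qᵐ;q)_∞ = (a;q)_∞ / (a;q)_m` brings the result into the stated form. For `|x|, |y| ≤ 1`
the quadruple series converges absolutely, which justifies summing iteratively.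

The q-binomial theorem `∑ (a;q)_n/(q;q)_n zⁿ = (az;q)_∞/(z;q)_∞` is proved from the
functional equation `(1 - z) F(z) = (1 - az) F(qz)`: iterating it gives
`F(z) (z;q)_N = (az;q)_N F(q^N z)`, and `F(q^N z) → F(0) = 1` by dominated convergence.
-/

open Filter Topology

section QPochhammer

lemma qPoch_zero_left (q : ℂ) (n : ℕ) : qPoch 0 q n = 1 := by
  simp [qPoch]

lemma qPoch_zero (a q : ℂ) : qPoch a q 0 = 1 :=
  Finset.prod_range_zero _

lemma qPoch_succ (a q : ℂ) (n : ℕ) : qPoch a q (n + 1) = qPoch a q n * (1 - a * q ^ n) :=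
  Finset.prod_range_succ _ _

lemma qPochInf_zero_left (q : ℂ) : qPochInf 0 q = 1 := by
  simp [qPochInf]

variable {a q : ℂ}

lemma norm_mul_pow_lt_one (ha : ‖a‖ < 1) (hq : ‖q‖ ≤ 1) (k : ℕ) : ‖a * q ^ k‖ < 1 := by
  rw [norm_mul, norm_pow]
  exact mul_lt_one_of_nonneg_of_lt_one_left (norm_nonneg a) ha (pow_le_one₀ (norm_nonneg q) hq)

lemma norm_pow_lt_one (hq : ‖q‖ < 1) {k : ℕ} (hk : k ≠ 0) : ‖q ^ k‖ < 1 := by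
  rw [norm_pow]
  exact pow_lt_one₀ (norm_nonneg q) hq hk

lemma norm_mul_pow_lt_one_of_le_one {u : ℂ} (hu : ‖u‖ ≤ 1) (hq : ‖q‖ < 1) {k : ℕ} (hk : k ≠ 0) :
    ‖u * q ^ k‖ < 1 := by
  rw [norm_mul]
  exact mul_lt_one_of_nonneg_of_lt_one_right hu (norm_nonneg _) (norm_pow_lt_one hq hk)

lemma one_sub_mul_pow_ne_zero (ha : ‖a‖ < 1) (hq : ‖q‖ ≤ 1) (k : ℕ) : 1 - a * q ^ k ≠ 0 := by
  intro h
  simpa [← sub_eq_zero.mp h] using norm_mul_pow_lt_one ha hq k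

lemma qPoch_ne_zero (ha : ‖a‖ < 1) (hq : ‖q‖ ≤ 1) (n : ℕ) : qPoch a q n ≠ 0 :=
  Finset.prod_ne_zero_iff.mpr fun k _ => one_sub_mul_pow_ne_zero ha hq k

lemma summable_norm_neg_mul_pow (a : ℂ) (hq : ‖q‖ < 1) : Summable fun k : ℕ => ‖-(a * q ^ k)‖ := by
  simpa [norm_mul, norm_pow] using
    (summable_geometric_of_lt_one (norm_nonneg q) hq).mul_left ‖a‖

lemma multipliable_one_sub_mul_pow (a : ℂ) (hq : ‖q‖ < 1) :
    Multipliable fun k : ℕ => 1 - a * q ^ k := by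
  simpa [sub_eq_add_neg] using multipliable_one_add_of_summable (summable_norm_neg_mul_pow a hq)

lemma tendsto_qPoch_qPochInf (a : ℂ) (hq : ‖q‖ < 1) :
    Tendsto (qPoch a q) atTop (𝓝 (qPochInf a q)) :=
  (multipliable_one_sub_mul_pow a hq).hasProd.tendsto_prod_nat

lemma qPochInf_ne_zero (ha : ‖a‖ < 1) (hq : ‖q‖ < 1) : qPochInf a q ≠ 0 := by
  have h := tprod_one_add_ne_zero_of_summable (f := fun k : ℕ => -(a * q ^ k))
    (fun k => by rw [← sub_eq_add_neg]; exact one_sub_mul_pow_ne_zero ha hq.le k)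
    (summable_norm_neg_mul_pow a hq)
  rw [qPochInf]
  simpa only [← sub_eq_add_neg] using h

lemma qPochInf_eq_qPoch_mul (a : ℂ) (hq : ‖q‖ < 1) (n : ℕ) :
    qPochInf a q = qPoch a q n * qPochInf (a * q ^ n) q := by
  have shift : ∀ i, 1 - a * q ^ (i + n) = 1 - a * q ^ n * q ^ i := fun i => by ring
  have h : Multipliable fun i => 1 - a * q ^ (i + n) := by
    simpa only [shift] using multipliable_one_sub_mul_pow (a * q ^ n) hq
  rw [qPochInf, qPochInf, qPoch,
    ← Multipliable.prod_mul_tprod_nat_mul' (f := fun i => 1 - a * q ^ i) h]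
  simp only [shift]

lemma qPochInf_mul_pow (ha : ‖a‖ < 1) (hq : ‖q‖ < 1) (n : ℕ) :
    qPochInf (a * q ^ n) q = qPochInf a q / qPoch a q n := by
  rw [qPochInf_eq_qPoch_mul a hq n, mul_div_cancel_left₀ _ (qPoch_ne_zero ha hq.le n)]

lemma exists_norm_qPoch_le (a : ℂ) (hq : ‖q‖ < 1) : ∃ C, ∀ n, ‖qPoch a q n‖ ≤ C := by
  obtain ⟨C, hC⟩ := isBounded_iff_forall_norm_le.mp
    (Metric.isBounded_range_of_tendsto _ (tendsto_qPoch_qPochInf a hq))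
  exact ⟨C, fun n => hC _ ⟨n, rfl⟩⟩

lemma exists_norm_inv_qPoch_le (ha : ‖a‖ < 1) (hq : ‖q‖ < 1) :
    ∃ C, ∀ n, ‖(qPoch a q n)⁻¹‖ ≤ C := by
  obtain ⟨C, hC⟩ := isBounded_iff_forall_norm_le.mp (Metric.isBounded_range_of_tendsto _
    ((tendsto_qPoch_qPochInf a hq).inv₀ (qPochInf_ne_zero ha hq)))
  exact ⟨C, fun n => hC _ ⟨n, rfl⟩⟩

end QPochhammer

section QBinomial

variable {a q z : ℂ}

noncomputable def qBinomialSeries (a q z : ℂ) : ℂ :=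
  ∑' n, qPoch a q n / qPoch q q n * z ^ n

lemma exists_norm_qPoch_div_qPoch_le (a : ℂ) (hq : ‖q‖ < 1) :
    ∃ C, ∀ n, ‖qPoch a q n / qPoch q q n‖ ≤ C := by
  obtain ⟨A, hA⟩ := exists_norm_qPoch_le a hq
  obtain ⟨B, hB⟩ := exists_norm_inv_qPoch_le hq hq
  refine ⟨A * B, fun n => ?_⟩
  rw [div_eq_mul_inv, norm_mul]
  exact mul_le_mul (hA n) (hB n) (norm_nonneg _) ((norm_nonneg _).trans (hA n))

lemma summable_qPoch_div_qPoch_mul_pow (a : ℂ) (hq : ‖q‖ < 1) (hz : ‖z‖ < 1) :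
    Summable fun n => qPoch a q n / qPoch q q n * z ^ n := by
  obtain ⟨C, hC⟩ := exists_norm_qPoch_div_qPoch_le a hq
  refine .of_norm_bounded ((summable_geometric_of_lt_one (norm_nonneg z) hz).mul_left C)
    fun n => ?_
  rw [norm_mul, norm_pow]
  exact mul_le_mul_of_nonneg_right (hC n) (by positivity)

lemma qPoch_div_qPoch_succ_mul (a : ℂ) (hq : ‖q‖ < 1) (n : ℕ) :
    qPoch a q (n + 1) / qPoch q q (n + 1) * (1 - q ^ (n + 1)) =
      qPoch a q n / qPoch q q n * (1 - a * q ^ n) := by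
  have h : 1 - q * q ^ n ≠ 0 := one_sub_mul_pow_ne_zero hq hq.le n
  rw [qPoch_succ, qPoch_succ, pow_succ', mul_div_mul_comm, mul_assoc, div_mul_cancel₀ _ h]

lemma qBinomialSeries_functional_eq (a : ℂ) (hq : ‖q‖ < 1) (hz : ‖z‖ < 1) :
    (1 - z) * qBinomialSeries a q z = (1 - a * z) * qBinomialSeries a q (q * z) := by
  set c : ℕ → ℂ := fun n => qPoch a q n / qPoch q q n
  have hS := summable_qPoch_div_qPoch_mul_pow a hq hz
  have hT := summable_qPoch_div_qPoch_mul_pow a hq (z := q * z)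
    (by simpa [mul_comm] using norm_mul_pow_lt_one hz hq.le 1)
  have key : qBinomialSeries a q z - qBinomialSeries a q (q * z) =
      z * qBinomialSeries a q z - a * z * qBinomialSeries a q (q * z) := by
    calc qBinomialSeries a q z - qBinomialSeries a q (q * z)
        = ∑' n, c n * (1 - q ^ n) * z ^ n := by
          rw [qBinomialSeries, qBinomialSeries, ← hS.tsum_sub hT]
          exact tsum_congr fun n => by ring
      _ = ∑' n, c (n + 1) * (1 - q ^ (n + 1)) * z ^ (n + 1) := by
          rw [(hS.sub hT).congr (fun n => by ring) |>.tsum_eq_zero_add]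
          simp
      _ = ∑' n, (z * (c n * z ^ n) - a * z * (c n * (q * z) ^ n)) := by
          refine tsum_congr fun n => ?_
          rw [qPoch_div_qPoch_succ_mul a hq n]
          ring
      _ = z * qBinomialSeries a q z - a * z * qBinomialSeries a q (q * z) := by
          rw [(hS.mul_left z).tsum_sub (hT.mul_left (a * z)), tsum_mul_left, tsum_mul_left]
          rfl
  linear_combination key

lemma qBinomialSeries_mul_qPoch (a : ℂ) (hq : ‖q‖ < 1) (hz : ‖z‖ < 1) (N : ℕ) :
    qBinomialSeries a q z * qPoch z q N = qPoch (a * z) q N * qBinomialSeries a q (q ^ N * z) := by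
  induction N with
  | zero => simp [qPoch_zero]
  | succ N ih =>
    have h := qBinomialSeries_functional_eq a hq (z := q ^ N * z)
      (by simpa [mul_comm] using norm_mul_pow_lt_one hz hq.le N)
    rw [qPoch_succ, qPoch_succ, ← mul_assoc, ih, pow_succ', mul_assoc q]
    linear_combination qPoch (a * z) q N * h

lemma tendsto_qBinomialSeries_pow_mul (a : ℂ) (hq : ‖q‖ < 1) (hz : ‖z‖ < 1) :
    Tendsto (fun N => qBinomialSeries a q (q ^ N * z)) atTop (𝓝 1) := by
  obtain ⟨C, hC⟩ := exists_norm_qPoch_div_qPoch_le a hq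
  have hlim : Tendsto (fun N : ℕ => q ^ N * z) atTop (𝓝 0) := by
    simpa using (tendsto_pow_atTop_nhds_zero_of_norm_lt_one hq).mul_const z
  have h := tendsto_tsum_of_dominated_convergence
    (f := fun N n => qPoch a q n / qPoch q q n * (q ^ N * z) ^ n)
    ((summable_geometric_of_lt_one (norm_nonneg z) hz).mul_left C)
    (fun n => (hlim.pow n).const_mul _)
    (Eventually.of_forall fun N n => by
      rw [norm_mul, norm_pow, norm_mul, norm_pow]
      refine mul_le_mul (hC n) (pow_le_pow_left₀ (by positivity) ?_ n) (by positivity)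
        ((norm_nonneg _).trans (hC 0))
      exact mul_le_of_le_one_left (norm_nonneg z) (pow_le_one₀ (norm_nonneg q) hq.le))
  rwa [tsum_eq_single 0 fun n hn => by rw [zero_pow hn, mul_zero], pow_zero, mul_one,
    qPoch_zero, qPoch_zero, div_one] at h

theorem qBinomialSeries_eq (a : ℂ) (hq : ‖q‖ < 1) (hz : ‖z‖ < 1) :
    qBinomialSeries a q z = qPochInf (a * z) q / qPochInf z q := by
  rw [eq_div_iff (qPochInf_ne_zero hz hq)]
  refine tendsto_nhds_unique ((tendsto_qPoch_qPochInf z hq).const_mul _) ?_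
  simpa only [qBinomialSeries_mul_qPoch a hq hz, mul_one] using
    (tendsto_qPoch_qPochInf (a * z) hq).mul (tendsto_qBinomialSeries_pow_mul a hq hz)

theorem tsum_pow_div_qPoch (hq : ‖q‖ < 1) (hz : ‖z‖ < 1) :
    ∑' n, z ^ n / qPoch q q n = (qPochInf z q)⁻¹ := by
  simpa [qBinomialSeries, qPoch_zero_left, qPochInf_zero_left, div_eq_inv_mul] using
    qBinomialSeries_eq 0 hq hz

lemma tsum_mul_pow_pow_div_qPoch (ha : ‖a‖ < 1) (hq : ‖q‖ < 1) (m : ℕ) :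
    ∑' n, (a * q ^ m) ^ n / qPoch q q n = qPoch a q m / qPochInf a q := by
  rw [tsum_pow_div_qPoch hq (norm_mul_pow_lt_one ha hq.le m), qPochInf_mul_pow ha hq, inv_div]

end QBinomial

theorem Summable.tsum_prod_prod_prod {α β γ δ E : Type*} [AddCommGroup E] [UniformSpace E]
    [IsUniformAddGroup E] [CompleteSpace E] [T0Space E] {f : α × β × γ × δ → E}
    (hf : Summable f) : ∑' p, f p = ∑' (a) (b) (c) (d), f (a, b, c, d) := by
  rw [hf.tsum_prod]
  refine tsum_congr fun a => ?_
  rw [(hf.prod_factor a).tsum_prod]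
  exact tsum_congr fun b => ((hf.prod_factor a).prod_factor b).tsum_prod

section Quadruple

variable {q x y : ℂ}

noncomputable def quadrupleSummand (q x y : ℂ) (n : ℕ × ℕ × ℕ × ℕ) : ℂ :=
  x ^ (n.1 + n.2.1 + 2 * n.2.2.2) * y ^ (n.2.1 + n.2.2.1) *
    q ^ (2 * Nat.choose n.1 2 + 2 * n.1 * n.2.1 + 4 * n.1 * n.2.2.1 +
      4 * n.2.2.1 * n.2.2.2 + n.1 + 3 * n.2.1 + 2 * n.2.2.1 + 2 * n.2.2.2) /
    (qPoch (q ^ 2) (q ^ 2) n.1 * qPoch (q ^ 2) (q ^ 2) n.2.1 *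
      qPoch (q ^ 4) (q ^ 4) n.2.2.1 * qPoch (q ^ 4) (q ^ 4) n.2.2.2)

lemma quadrupleSummand_eq (q x y : ℂ) (n₁ n₂ n₃ n₄ : ℕ) :
    quadrupleSummand q x y (n₁, n₂, n₃, n₄) =
      x ^ n₁ * q ^ (2 * Nat.choose n₁ 2 + n₁) / qPoch (q ^ 2) (q ^ 2) n₁ *
        ((x * y * q ^ 3 * (q ^ 2) ^ n₁) ^ n₂ / qPoch (q ^ 2) (q ^ 2) n₂ *
          ((y * q ^ 2 * (q ^ 4) ^ n₁) ^ n₃ / qPoch (q ^ 4) (q ^ 4) n₃ *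
            ((x ^ 2 * q ^ 2 * (q ^ 4) ^ n₃) ^ n₄ / qPoch (q ^ 4) (q ^ 4) n₄))) := by
  simp only [quadrupleSummand]
  ring

lemma summable_quadrupleSummand (hq : ‖q‖ < 1) (hx : ‖x‖ ≤ 1) (hy : ‖y‖ ≤ 1) :
    Summable (quadrupleSummand q x y) := by
  have hq₂ : ‖q ^ 2‖ < 1 := norm_pow_lt_one hq two_ne_zero
  have hq₄ : ‖q ^ 4‖ < 1 := norm_pow_lt_one hq four_ne_zero
  obtain ⟨B₂, hB₂⟩ := exists_norm_inv_qPoch_le hq₂ hq₂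
  obtain ⟨B₄, hB₄⟩ := exists_norm_inv_qPoch_le hq₄ hq₄
  set r := ‖q‖
  have hr := summable_geometric_of_lt_one (norm_nonneg q) hq
  have hr₄ : Summable fun n : ℕ × ℕ × ℕ × ℕ =>
      r ^ n.1 * (r ^ n.2.1 * (r ^ n.2.2.1 * r ^ n.2.2.2)) :=
    hr.mul_of_nonneg (hr.mul_of_nonneg (hr.mul_of_nonneg hr (fun _ => by positivity)
      (fun _ => by positivity)) (fun _ => by positivity) (fun _ => by positivity))
      (fun _ => by positivity) (fun _ => by positivity)
  refine .of_norm_bounded (hr₄.mul_left (B₂ * B₂ * B₄ * B₄)) fun ⟨n₁, n₂, n₃, n₄⟩ => ?_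
  have hnum : ‖x ^ (n₁ + n₂ + 2 * n₄) * y ^ (n₂ + n₃) * q ^ (2 * Nat.choose n₁ 2 + 2 * n₁ * n₂ +
      4 * n₁ * n₃ + 4 * n₃ * n₄ + n₁ + 3 * n₂ + 2 * n₃ + 2 * n₄)‖ ≤ r ^ (n₁ + n₂ + n₃ + n₄) := by
    rw [norm_mul, norm_mul, norm_pow, norm_pow, norm_pow]
    calc _ ≤ 1 * 1 * r ^ (2 * Nat.choose n₁ 2 + 2 * n₁ * n₂ +
          4 * n₁ * n₃ + 4 * n₃ * n₄ + n₁ + 3 * n₂ + 2 * n₃ + 2 * n₄) := by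
          gcongr <;> exact pow_le_one₀ (norm_nonneg _) ‹_›
      _ ≤ r ^ (n₁ + n₂ + n₃ + n₄) := by
          rw [one_mul, one_mul]
          exact pow_le_pow_of_le_one (norm_nonneg q) hq.le (by omega)
  have hden : ‖(qPoch (q ^ 2) (q ^ 2) n₁ * qPoch (q ^ 2) (q ^ 2) n₂ *
      qPoch (q ^ 4) (q ^ 4) n₃ * qPoch (q ^ 4) (q ^ 4) n₄)⁻¹‖ ≤ B₂ * B₂ * B₄ * B₄ := by
    have hB₂₀ : 0 ≤ B₂ := (norm_nonneg _).trans (hB₂ 0)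
    have hB₄₀ : 0 ≤ B₄ := (norm_nonneg _).trans (hB₄ 0)
    simp only [mul_inv, norm_mul]
    bound [hB₂ n₁, hB₂ n₂, hB₄ n₃, hB₄ n₄]
  rw [quadrupleSummand, div_eq_mul_inv, norm_mul]
  calc _ ≤ r ^ (n₁ + n₂ + n₃ + n₄) * (B₂ * B₂ * B₄ * B₄) := by gcongr
    _ = _ := by ring

lemma tsum_tsum_tsum_quadrupleSummand (hq : ‖q‖ < 1) (hx : ‖x‖ ≤ 1) (hy : ‖y‖ ≤ 1) (n₁ : ℕ) :
    ∑' (n₂) (n₃) (n₄), quadrupleSummand q x y (n₁, n₂, n₃, n₄) =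
      qPochInf (x ^ 2 * y * q ^ 4) (q ^ 4) /
        (qPochInf (x ^ 2 * q ^ 2) (q ^ 4) * qPochInf (x * y * q ^ 3) (q ^ 2) *
          qPochInf (y * q ^ 2) (q ^ 4)) *
      (x ^ n₁ * q ^ (2 * Nat.choose n₁ 2 + n₁) *
        qPoch (x * y * q ^ 3) (q ^ 2) n₁ * qPoch (y * q ^ 2) (q ^ 4) n₁ /
        (qPoch (q ^ 2) (q ^ 2) n₁ * qPoch (x ^ 2 * y * q ^ 4) (q ^ 4) n₁)) := by
  have hq₂ : ‖q ^ 2‖ < 1 := norm_pow_lt_one hq two_ne_zero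
  have hq₄ : ‖q ^ 4‖ < 1 := norm_pow_lt_one hq four_ne_zero
  have hxy : ‖x * y * q ^ 3‖ < 1 := norm_mul_pow_lt_one_of_le_one
    (by simpa using mul_le_one₀ hx (norm_nonneg y) hy) hq three_ne_zero
  have hy' : ‖y * q ^ 2‖ < 1 := norm_mul_pow_lt_one_of_le_one hy hq two_ne_zero
  have hx' : ‖x ^ 2 * q ^ 2‖ < 1 := norm_mul_pow_lt_one_of_le_one
    (by simpa using hx) hq two_ne_zero
  have hxy' : ‖x ^ 2 * y * q ^ 4‖ < 1 := norm_mul_pow_lt_one_of_le_one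
    (by simpa using mul_le_one₀ (pow_le_one₀ (norm_nonneg x) hx) (norm_nonneg y) hy) hq
    four_ne_zero
  simp only [quadrupleSummand_eq, tsum_mul_left, tsum_mul_right,
    tsum_mul_pow_pow_div_qPoch hxy hq₂, tsum_mul_pow_pow_div_qPoch hx' hq₄]
  have hbinom : ∑' n₃, (y * q ^ 2 * (q ^ 4) ^ n₁) ^ n₃ / qPoch (q ^ 4) (q ^ 4) n₃ *
      (qPoch (x ^ 2 * q ^ 2) (q ^ 4) n₃ / qPochInf (x ^ 2 * q ^ 2) (q ^ 4)) =
      qBinomialSeries (x ^ 2 * q ^ 2) (q ^ 4) (y * q ^ 2 * (q ^ 4) ^ n₁) /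
        qPochInf (x ^ 2 * q ^ 2) (q ^ 4) := by
    rw [qBinomialSeries, ← tsum_div_const]
    exact tsum_congr fun n => by ring
  rw [hbinom, qBinomialSeries_eq _ hq₄ (norm_mul_pow_lt_one hy' hq₄.le n₁),
    show x ^ 2 * q ^ 2 * (y * q ^ 2 * (q ^ 4) ^ n₁) = x ^ 2 * y * q ^ 4 * (q ^ 4) ^ n₁ by ring,
    qPochInf_mul_pow hxy' hq₄, qPochInf_mul_pow hy' hq₄]
  simp only [div_eq_mul_inv, mul_inv, inv_inv]
  ring

end Quadruple

/-- The reduction of the plain quadruple sum to a single sum of Rogers–Ramanujan type. -/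
theorem plain_quadruple_sum_to_single_sum (q x y : ℂ) (hq : ‖q‖ < 1)
    (hx : ‖x‖ ≤ 1) (hy : ‖y‖ ≤ 1) :
    ∑' n : ℕ × ℕ × ℕ × ℕ,
        x ^ (n.1 + n.2.1 + 2 * n.2.2.2) * y ^ (n.2.1 + n.2.2.1) *
          q ^ (2 * Nat.choose n.1 2 + 2 * n.1 * n.2.1 + 4 * n.1 * n.2.2.1 +
            4 * n.2.2.1 * n.2.2.2 + n.1 + 3 * n.2.1 + 2 * n.2.2.1 + 2 * n.2.2.2) /
          (qPoch (q ^ 2) (q ^ 2) n.1 * qPoch (q ^ 2) (q ^ 2) n.2.1 *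
            qPoch (q ^ 4) (q ^ 4) n.2.2.1 * qPoch (q ^ 4) (q ^ 4) n.2.2.2) =
      qPochInf (x ^ 2 * y * q ^ 4) (q ^ 4) /
        (qPochInf (x ^ 2 * q ^ 2) (q ^ 4) * qPochInf (x * y * q ^ 3) (q ^ 2) *
          qPochInf (y * q ^ 2) (q ^ 4)) *
      ∑' n : ℕ,
        x ^ n * q ^ (2 * Nat.choose n 2 + n) *
          qPoch (x * y * q ^ 3) (q ^ 2) n * qPoch (y * q ^ 2) (q ^ 4) n /
          (qPoch (q ^ 2) (q ^ 2) n * qPoch (x ^ 2 * y * q ^ 4) (q ^ 4) n) := by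
  change ∑' n, quadrupleSummand q x y n = _
  rw [(summable_quadrupleSummand hq hx hy).tsum_prod_prod_prod, ← tsum_mul_left]
  exact tsum_congr (tsum_tsum_tsum_quadrupleSummand hq hx hy)
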